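/- Let X be a topological space and P a ring of open subsets of X such that P ⊆ P_seq and P is closed under a winning strategy for Player I in the open-open game on X. Then X/P with the Q_P-topology is a completely regular space and the Q_P-map q : X → X/P is skeletal. -/

import Mathlib

open Set Topology

/-- The equivalence relation identifying points lying in exactly the same members of `P`. -/
def pSetoid {X : Type*} (P : Set (Set X)) : Setoid X where
  r x y := ∀ V ∈ P, x ∈ V ↔ y ∈ V
  iseqv := ⟨fun _ _ _ => Iff.rfl, fun h V hV => (h V hV).symm,
    fun h1 h2 V hV => (h1 V hV).trans (h2 V hV)⟩

/-- The quotient `X/P`. -/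
def pQuot {X : Type*} (P : Set (Set X)) : Type _ := Quotient (pSetoid P)

/-- The `Q_P`-map `q : X → X/P`. -/
def pMap {X : Type*} (P : Set (Set X)) : X → pQuot P := Quotient.mk (pSetoid P)

/-- The `Q_P`-topology on `X/P`, generated by the images `q[V]`, `V ∈ P`. -/
def pTop {X : Type*} (P : Set (Set X)) : TopologicalSpace (pQuot P) :=
  TopologicalSpace.generateFrom {S | ∃ V ∈ P, S = pMap P '' V}

/-- `R_seq`: sets `W` that are unions `⋃ₙ Uₙ` with `Uₖ ⊆ X \ Vₖ ⊆ Uₖ₊₁`, `Uₙ, Vₙ ∈ R`. -/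
def seqFam {X : Type*} (R : Set (Set X)) : Set (Set X) :=
  {W | ∃ U V : ℕ → Set X, (∀ n, U n ∈ R) ∧ (∀ n, V n ∈ R) ∧
    (∀ k, U k ⊆ (V k)ᶜ ∧ (V k)ᶜ ⊆ U (k + 1)) ∧ (⋃ n, U n) = W}

/-- The family of cozero sets of `X`. -/
def cozeroFam (X : Type*) [TopologicalSpace X] : Set (Set X) :=
  {W | ∃ f : X → ℝ, Continuous f ∧ (∀ x, f x ∈ Set.Icc (0 : ℝ) 1) ∧ W = f ⁻¹' Set.Ioc 0 1}

/-- A skeletal map: a continuous surjection such that the closure of the image of every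
nonempty open set has nonempty interior. -/
def IsSkeletal {X Y : Type*} [TopologicalSpace X] [TopologicalSpace Y] (f : X → Y) : Prop :=
  Continuous f ∧ Function.Surjective f ∧
    ∀ U : Set X, IsOpen U → U.Nonempty → (interior (closure (f '' U))).Nonempty

/-- A skeletal family of open subsets of `X`. -/
def SkeletalFamily {X : Type*} [TopologicalSpace X] (P : Set (Set X)) : Prop :=
  ∀ V : Set X, IsOpen V → V.Nonempty →
    ∃ W ∈ P, ∀ U ∈ P, U ⊆ W → U.Nonempty → (U ∩ V).Nonempty

/-- A π-base: a family of nonempty open sets such that every nonempty open set contains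
a member of the family. -/
def IsPiBase {Y : Type*} [TopologicalSpace Y] (B : Set (Set Y)) : Prop :=
  (∀ b ∈ B, IsOpen b ∧ b.Nonempty) ∧ ∀ U : Set Y, IsOpen U → U.Nonempty → ∃ b ∈ B, b ⊆ U

/-- A strategy for Player I in the open-open game produces nonempty open sets. -/
def ValidStrategy {X : Type*} [TopologicalSpace X] (σ : List (Set X) → Set X) : Prop :=
  ∀ l : List (Set X), IsOpen (σ l) ∧ (σ l).Nonempty

/-- `B` is a play of Player II against the strategy `σ` of Player I: each `B n` is a
nonempty open subset of the set produced by `σ` from the previous moves of Player II. -/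
def IsPlayAgainst {X : Type*} [TopologicalSpace X] (σ : List (Set X) → Set X)
    (B : ℕ → Set X) : Prop :=
  ∀ n, IsOpen (B n) ∧ (B n).Nonempty ∧ B n ⊆ σ (List.ofFn (fun i : Fin n => B i))

/-- A winning strategy for Player I in the open-open game: every play of Player II against
it has dense union. -/
def WinningStrategy {X : Type*} [TopologicalSpace X] (σ : List (Set X) → Set X) : Prop :=
  ValidStrategy σ ∧ ∀ B : ℕ → Set X, IsPlayAgainst σ B → Dense (⋃ n, B n)

/-- A space is I-favorable if Player I has a winning strategy in the open-open game. -/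
def IFavorable (X : Type*) [TopologicalSpace X] : Prop :=
  ∃ σ : List (Set X) → Set X, WinningStrategy σ

/-- `P` is closed under the strategy `σ`. -/
def ClosedUnderStrategy {X : Type*} [TopologicalSpace X] (P : Set (Set X))
    (σ : List (Set X) → Set X) : Prop :=
  σ [] ∈ P ∧ ∀ l : List (Set X), (∀ b ∈ l, b ∈ P) → σ l ∈ P

/-- The limit of an inverse system, as the subspace of threads in the product. -/
abbrev invLimit {ι : Type*} [Preorder ι] (Y : ι → Type*)
    (bond : ∀ i j : ι, i ≤ j → Y j → Y i) : Type _ :=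
  {u : ∀ i, Y i // ∀ (i j : ι) (h : i ≤ j), bond i j h (u j) = u i}

/-- The topology of the inverse limit, with explicitly given topologies on factors. -/
def invLimitTop {ι : Type*} [Preorder ι] (Y : ι → Type*) (t : ∀ i, TopologicalSpace (Y i))
    (bond : ∀ i j : ι, i ≤ j → Y j → Y i) : TopologicalSpace (invLimit Y bond) :=
  @instTopologicalSpaceSubtype _ _ (@Pi.topologicalSpace ι Y t)

/-- σ-completeness of an inverse system: each countable chain of indices has a least upper
bound `l`, and the canonical map from `Y l` to the limit of the countable subsystem is a
homeomorphism (an embedding whose range is the set of threads). -/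
def SigmaComplete {ι : Type*} [Preorder ι] (Y : ι → Type*) (t : ∀ i, TopologicalSpace (Y i))
    (bond : ∀ i j : ι, i ≤ j → Y j → Y i) : Prop :=
  (∀ s : ℕ → ι, Monotone s → ∃ l, IsLUB (Set.range s) l) ∧
  ∀ (s : ℕ → ι) (hs : Monotone s) (l : ι) (hl : IsLUB (Set.range s) l),
    @IsEmbedding (Y l) (∀ n, Y (s n)) (t l) (@Pi.topologicalSpace ℕ _ (fun n => t (s n)))
      (fun x n => bond (s n) l (hl.1 (Set.mem_range_self n)) x) ∧
    Set.range (fun (x : Y l) (n : ℕ) => bond (s n) l (hl.1 (Set.mem_range_self n)) x) =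
      {u : ∀ n, Y (s n) | ∀ (n m : ℕ) (h : n ≤ m), bond (s n) (s m) (hs h) (u m) = u n}

/-- A σ-complete inverse system of topological spaces over a directed partial order,
with continuous surjective bonding maps. -/
structure TopInvSystem : Type 1 where
  ι : Type
  [ord : PartialOrder ι]
  directed : IsDirected ι (· ≤ ·)
  Y : ι → Type
  [t : ∀ i, TopologicalSpace (Y i)]
  bond : ∀ i j : ι, i ≤ j → Y j → Y i
  bond_refl : ∀ i (x : Y i), bond i i le_rfl x = x
  bond_comp : ∀ (i j k : ι) (hij : i ≤ j) (hjk : j ≤ k) (x : Y k),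
    bond i j hij (bond j k hjk x) = bond i k (hij.trans hjk) x
  bond_cont : ∀ (i j : ι) (h : i ≤ j), Continuous (bond i j h)
  bond_surj : ∀ (i j : ι) (h : i ≤ j), Function.Surjective (bond i j h)
  sigmaComplete : SigmaComplete Y t bond

instance (S : TopInvSystem) : PartialOrder S.ι := S.ord
instance (S : TopInvSystem) (i : S.ι) : TopologicalSpace (S.Y i) := S.t i

/-- The limit of a `TopInvSystem`. -/
def TopInvSystem.Limit (S : TopInvSystem) : Type := invLimit S.Y S.bond

instance (S : TopInvSystem) : TopologicalSpace S.Limit :=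
  inferInstanceAs (TopologicalSpace (invLimit S.Y S.bond))

/-- The bonding map `X/R → X/P` for `P ⊆ R`, sending `[x]_R` to `[x]_P`. -/
def pBond {X : Type*} (P R : Set (Set X)) (h : P ⊆ R) : pQuot R → pQuot P :=
  Quotient.lift (pMap P) (fun _ _ hab => Quotient.sound (fun V hV => hab V (h hV)))

/-- A `T`-club on a space `X` (with `T` the cozero sets): a collection of countable
subfamilies of `T`, each closed under a fixed winning strategy for Player I, closed under
finite unions and intersections, contained in its `seq`-family, which is cofinal among
countable subfamilies of `T` and closed under countable chains. -/
def TClub {X : Type*} [TopologicalSpace X] (C : Set (Set (Set X))) : Prop :=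
  ∃ σ : List (Set X) → Set X, WinningStrategy σ ∧
    (∀ P ∈ C, P.Countable ∧ P ⊆ cozeroFam X ∧ ClosedUnderStrategy P σ ∧
      (∀ A ∈ P, ∀ B ∈ P, A ∪ B ∈ P ∧ A ∩ B ∈ P) ∧ P ⊆ seqFam P) ∧
    (∀ Q : Set (Set X), Q.Countable → Q ⊆ cozeroFam X → ∃ P ∈ C, Q ⊆ P) ∧
    (∀ f : ℕ → Set (Set X), (∀ n, f n ∈ C) → Monotone f → (⋃ n, f n) ∈ C)

/-!
The `Q_P`-topology on `X/P` is generated by the sets `q[V]`, `V ∈ P`, and the decomposition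
`V = ⋃ Uₙ`, `Uₖ ⊆ X \ Vₖ ⊆ Uₖ₊₁` separates each point of `q[V]` from `(q[V])ᶜ` by the disjoint
open sets `q[Uₖ]` and `q[Vₖ]`. Hence `X/R` is regular whenever `R ⊆ R_seq`; for countable `R`
it is also second countable, hence normal and completely regular. Every `V ∈ P` lies in a
countable `R ⊆ P` with `R ⊆ R_seq`, and the continuous map `X/P → X/R` then carries the
Urysohn function of `q_R[V]` back to `X/P`.

For skeletality, if no nonempty `W ∈ P` had all its nonempty subsets in `P` meeting a given
nonempty open `U`, Player II could answer every move of the strategy (which stays in `P`) by a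
nonempty member of `P` disjoint from `U`; the union of such a play misses `U`, so it is not
dense. Given such a `W`, the open set `q[W]` lies in the closure of `q[U]`.
-/

open Set Topology TopologicalSpace

theorem exists_countable_subset_forall_subset {α : Type*} (S : Set α) (F : α → Set α)
    (hFc : ∀ a, (F a).Countable) (hFS : ∀ a ∈ S, F a ⊆ S) {a : α} (ha : a ∈ S) :
    ∃ T ⊆ S, T.Countable ∧ a ∈ T ∧ ∀ b ∈ T, F b ⊆ T := by
  let stage : ℕ → Set α := fun n => Nat.rec {a} (fun _ s => ⋃ b ∈ s, F b) n
  have stage_succ (n : ℕ) : stage (n + 1) = ⋃ b ∈ stage n, F b := rfl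
  have stage_subset (n : ℕ) : stage n ⊆ S := by
    induction n with
    | zero => exact singleton_subset_iff.2 ha
    | succ n ih => exact stage_succ n ▸ iUnion₂_subset fun b hb => hFS b (ih hb)
  have stage_countable (n : ℕ) : (stage n).Countable := by
    induction n with
    | zero => exact countable_singleton a
    | succ n ih => exact stage_succ n ▸ ih.biUnion fun b _ => hFc b
  refine ⟨⋃ n, stage n, iUnion_subset stage_subset, countable_iUnion stage_countable,
    mem_iUnion.2 ⟨0, rfl⟩, fun b hb => ?_⟩
  obtain ⟨n, hn⟩ := mem_iUnion.1 hb
  exact (subset_biUnion_of_mem hn).trans (subset_iUnion stage (n + 1))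

theorem List.exists_seq_eq_ofFn {α : Type*} (r : List α → α) :
    ∃ B : ℕ → α, ∀ n, B n = r (List.ofFn fun i : Fin n => B i) := by
  let L : ℕ → List α := fun n => Nat.rec [] (fun _ l => l ++ [r l]) n
  have ofFn_eq (n : ℕ) : List.ofFn (fun i : Fin n => r (L i)) = L n := by
    induction n with
    | zero => rfl
    | succ n ih =>
      simp only [List.ofFn_succ', List.concat_eq_append, Fin.val_castSucc, Fin.val_last, ih]
      rfl
  exact ⟨fun n => r (L n), fun n => by rw [ofFn_eq]⟩

theorem TopologicalSpace.IsTopologicalBasis.completelyRegularSpace {X : Type*}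
    [TopologicalSpace X] {B : Set (Set X)} (hB : IsTopologicalBasis B)
    (h : ∀ b ∈ B, ∀ x ∈ b, ∃ f : X → unitInterval, Continuous f ∧ f x = 0 ∧ EqOn f 1 bᶜ) :
    CompletelyRegularSpace X := by
  refine completelyRegularSpace_iff_isOpen.2 fun x K hK hxK => ?_
  obtain ⟨b, hb, hxb, hbK⟩ := hB.exists_subset_of_mem_open hxK hK
  obtain ⟨f, hf, hfx, hf1⟩ := h b hb x hxb
  exact ⟨f, hf, hfx, hf1.mono (compl_subset_compl.2 hbK)⟩

section QuotientTopology

attribute [local instance] pTop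

variable {X : Type*} (P : Set (Set X))

theorem pMap_surjective : Function.Surjective (pMap P) := Quotient.exists_rep

variable {P}

theorem pMap_mem_image_iff {V : Set X} (hV : V ∈ P) {x : X} :
    pMap P x ∈ pMap P '' V ↔ x ∈ V :=
  ⟨fun ⟨_, hy, he⟩ => (Quotient.exact he V hV).1 hy, fun hx => ⟨x, hx, rfl⟩⟩

theorem pMap_preimage_image {V : Set X} (hV : V ∈ P) : pMap P ⁻¹' (pMap P '' V) = V :=
  Set.ext fun _ => pMap_mem_image_iff hV

theorem pMap_image_inter {A B : Set X} (hA : A ∈ P) (hB : B ∈ P) :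
    pMap P '' (A ∩ B) = pMap P '' A ∩ pMap P '' B := by
  rw [← image_preimage_eq (pMap P '' A ∩ pMap P '' B) (pMap_surjective P), preimage_inter,
    pMap_preimage_image hA, pMap_preimage_image hB]

theorem isOpen_pMap_image {V : Set X} (hV : V ∈ P) : IsOpen (pMap P '' V) :=
  isOpen_generateFrom_of_mem ⟨V, hV, rfl⟩

theorem isTopologicalBasis_pTop (hinter : ∀ A ∈ P, ∀ B ∈ P, A ∩ B ∈ P) :
    IsTopologicalBasis (insert univ {S | ∃ V ∈ P, S = pMap P '' V}) := by
  refine isTopologicalBasis_of_subbasis_of_inter rfl ?_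
  rintro _ ⟨A, hA, rfl⟩ _ ⟨B, hB, rfl⟩
  exact ⟨A ∩ B, hinter A hA B hB, (pMap_image_inter hA hB).symm⟩

theorem continuous_pMap [TopologicalSpace X] (hopen : ∀ V ∈ P, IsOpen V) :
    Continuous (pMap P) := by
  refine continuous_generateFrom_iff.2 ?_
  rintro _ ⟨V, hV, rfl⟩
  rw [pMap_preimage_image hV]
  exact hopen V hV

theorem regularSpace_pTop (hseq : P ⊆ seqFam P) : RegularSpace (pQuot P) := by
  refine (regularSpace_generateFrom rfl).2 ?_
  rintro _ ⟨V, hV, rfl⟩ _ ⟨x, hx, rfl⟩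
  obtain ⟨U, W, hU, hW, hUW, rfl⟩ := hseq hV
  obtain ⟨k, hxk⟩ := mem_iUnion.1 hx
  have hcompl : (pMap P '' ⋃ n, U n)ᶜ ⊆ pMap P '' W k := by
    intro z hz
    obtain ⟨y, rfl⟩ := pMap_surjective P z
    by_contra hyW
    exact hz ⟨y, mem_iUnion.2 ⟨k + 1, (hUW k).2 fun hyk => hyW ⟨y, hyk, rfl⟩⟩, rfl⟩
  have hdisj : Disjoint (pMap P '' W k) (pMap P '' U k) := by
    rw [Set.disjoint_left]
    rintro _ ⟨y, hy, rfl⟩ hyU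
    exact (hUW k).1 ((pMap_mem_image_iff (hU k)).1 hyU) hy
  exact Filter.disjoint_of_disjoint_of_mem hdisj
    ((isOpen_pMap_image (hW k)).mem_nhdsSet.2 hcompl)
    ((isOpen_pMap_image (hU k)).mem_nhds ⟨x, hxk, rfl⟩)

theorem secondCountableTopology_pTop (hcount : P.Countable) :
    SecondCountableTopology (pQuot P) :=
  SecondCountableTopology.mk' <| (hcount.image (pMap P '' ·)).mono <| by
    rintro _ ⟨V, hV, rfl⟩
    exact mem_image_of_mem _ hV

theorem completelyRegularSpace_pTop_of_countable (hseq : P ⊆ seqFam P) (hcount : P.Countable) :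
    CompletelyRegularSpace (pQuot P) :=
  have := regularSpace_pTop hseq
  have := secondCountableTopology_pTop hcount
  inferInstance

variable {R : Set (Set X)}

theorem pBond_pMap (h : R ⊆ P) (x : X) : pBond R P h (pMap P x) = pMap R x := rfl

theorem pBond_preimage_image (h : R ⊆ P) {V : Set X} (hV : V ∈ R) :
    pBond R P h ⁻¹' (pMap R '' V) = pMap P '' V := by
  ext z
  obtain ⟨x, rfl⟩ := pMap_surjective P z
  rw [mem_preimage, pBond_pMap, pMap_mem_image_iff hV, pMap_mem_image_iff (h hV)]

theorem continuous_pBond (h : R ⊆ P) : Continuous (pBond R P h) := by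
  refine continuous_generateFrom_iff.2 ?_
  rintro _ ⟨V, hV, rfl⟩
  rw [pBond_preimage_image h hV]
  exact isOpen_pMap_image (h hV)

theorem exists_countable_subset_seqFam (hseq : P ⊆ seqFam P) {V : Set X} (hV : V ∈ P) :
    ∃ R ⊆ P, R.Countable ∧ V ∈ R ∧ R ⊆ seqFam R := by
  have hseq' : ∀ A ∈ P, ∃ U W : ℕ → Set X, (∀ n, U n ∈ P) ∧ (∀ n, W n ∈ P) ∧
      (∀ k, U k ⊆ (W k)ᶜ ∧ (W k)ᶜ ⊆ U (k + 1)) ∧ ⋃ n, U n = A := fun A hA => hseq hA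
  choose! U W hU hW hUW hunion using hseq'
  obtain ⟨R, hRP, hRc, hVR, hclosed⟩ := exists_countable_subset_forall_subset P
    (fun A => range (U A) ∪ range (W A)) (fun A => (countable_range _).union (countable_range _))
    (fun A hA => union_subset (range_subset_iff.2 (hU A hA)) (range_subset_iff.2 (hW A hA))) hV
  refine ⟨R, hRP, hRc, hVR, fun A hA => ⟨U A, W A, fun n => ?_, fun n => ?_,
    hUW A (hRP hA), hunion A (hRP hA)⟩⟩
  · exact hclosed A hA (Or.inl (mem_range_self n))
  · exact hclosed A hA (Or.inr (mem_range_self n))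

theorem completelyRegularSpace_pTop (hinter : ∀ A ∈ P, ∀ B ∈ P, A ∩ B ∈ P)
    (hseq : P ⊆ seqFam P) : CompletelyRegularSpace (pQuot P) := by
  refine (isTopologicalBasis_pTop hinter).completelyRegularSpace ?_
  rintro _ (rfl | ⟨V, hV, rfl⟩) x hx
  · exact ⟨fun _ => 0, continuous_const, rfl, by simp⟩
  obtain ⟨R, hRP, hRc, hVR, hRseq⟩ := exists_countable_subset_seqFam hseq hV
  have := completelyRegularSpace_pTop_of_countable hRseq hRc
  obtain ⟨y, hy, rfl⟩ := hx
  obtain ⟨f, hf, hfy, hf1⟩ := CompletelyRegularSpace.completely_regular_isOpen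
    (pMap R y) _ (isOpen_pMap_image hVR) ⟨y, hy, rfl⟩
  refine ⟨f ∘ pBond R P hRP, hf.comp (continuous_pBond hRP), hfy, fun z hz => hf1 ?_⟩
  show z ∈ pBond R P hRP ⁻¹' (pMap R '' V)ᶜ
  rwa [preimage_compl, pBond_preimage_image hRP hVR]

variable [TopologicalSpace X] {σ : List (Set X) → Set X}

theorem exists_mem_nonempty_forall_inter_nonempty (hopen : ∀ V ∈ P, IsOpen V)
    (hwin : WinningStrategy σ) (hclosed : ClosedUnderStrategy P σ) {U : Set X} (hU : IsOpen U)
    (hUne : U.Nonempty) :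
    ∃ W ∈ P, W.Nonempty ∧ ∀ V ∈ P, V ⊆ W → V.Nonempty → (V ∩ U).Nonempty := by
  by_contra! hreply
  choose! reply hreplyP hreply_sub hreply_ne hreply_inter using hreply
  obtain ⟨B, hB⟩ := List.exists_seq_eq_ofFn (reply ∘ σ)
  have hmove (n : ℕ) : B n ∈ P ∧ B n ⊆ σ (List.ofFn fun i : Fin n => B i) ∧ (B n).Nonempty ∧
      B n ∩ U = ∅ := by
    induction n using Nat.strong_induction_on with
    | _ n ih =>
      have hσ : σ (List.ofFn fun i : Fin n => B i) ∈ P := hclosed.2 _ fun b hb => by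
        obtain ⟨i, rfl⟩ := (List.mem_ofFn' _ _).1 hb
        exact (ih i i.2).1
      have hne := (hwin.1 (List.ofFn fun i : Fin n => B i)).2
      rw [hB n]
      exact ⟨hreplyP _ hσ hne, hreply_sub _ hσ hne, hreply_ne _ hσ hne, hreply_inter _ hσ hne⟩
  have hplay : IsPlayAgainst σ B := fun n =>
    let ⟨hBP, hBσ, hBne, _⟩ := hmove n
    ⟨hopen _ hBP, hBne, hBσ⟩
  obtain ⟨x, hxU, hxB⟩ := (hwin.2 B hplay).inter_open_nonempty U hU hUne
  obtain ⟨n, hxn⟩ := mem_iUnion.1 hxB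
  obtain ⟨-, -, -, hBU⟩ := hmove n
  exact hBU.subset ⟨hxn, hxU⟩

theorem isSkeletal_pMap (hopen : ∀ V ∈ P, IsOpen V) (hinter : ∀ A ∈ P, ∀ B ∈ P, A ∩ B ∈ P)
    (hwin : WinningStrategy σ) (hclosed : ClosedUnderStrategy P σ) :
    IsSkeletal (pMap P) := by
  refine ⟨continuous_pMap hopen, pMap_surjective P, fun U hU hUne => ?_⟩
  obtain ⟨W, hW, ⟨x, hx⟩, hWU⟩ :=
    exists_mem_nonempty_forall_inter_nonempty hopen hwin hclosed hU hUne
  refine ⟨pMap P x, interior_maximal ?_ (isOpen_pMap_image hW) ⟨x, hx, rfl⟩⟩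
  rintro _ ⟨y, hy, rfl⟩
  refine (isTopologicalBasis_pTop hinter).mem_closure_iff.2 ?_
  rintro _ (rfl | ⟨V, hV, rfl⟩) hyV
  · exact (hUne.image _).mono fun _ h => ⟨mem_univ _, h⟩
  obtain ⟨z, ⟨hzV, -⟩, hzU⟩ := hWU (V ∩ W) (hinter V hV W hW) inter_subset_right
    ⟨y, (pMap_mem_image_iff hV).1 hyV, hy⟩
  exact ⟨pMap P z, ⟨z, hzV, rfl⟩, z, hzU, rfl⟩

end QuotientTopology

theorem stmt15 {X : Type*} [TopologicalSpace X] (P : Set (Set X))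
    (hopen : ∀ V ∈ P, IsOpen V)
    (hring : ∀ A ∈ P, ∀ B ∈ P, A ∪ B ∈ P ∧ A ∩ B ∈ P)
    (hseq : P ⊆ seqFam P)
    (σ : List (Set X) → Set X) (hwin : WinningStrategy σ)
    (hclosed : ClosedUnderStrategy P σ) :
    @CompletelyRegularSpace (pQuot P) (pTop P) ∧
      @IsSkeletal X (pQuot P) _ (pTop P) (pMap P) := by
  have hinter : ∀ A ∈ P, ∀ B ∈ P, A ∩ B ∈ P := fun A hA B hB => (hring A hA B hB).2
  exact ⟨completelyRegularSpace_pTop hinter hseq, isSkeletal_pMap hopen hinter hwin hclosed⟩
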